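/- Let P_s be a sign pattern on n nodes, let A ∈ Q_s(P_s), and let ν ∈ ℝ^n satisfy ν^T A = 0 (i.e., ν is a left eigenvector of A for the eigenvalue 0, or ν = 0). Let Z ⊆ V be such that ν_i = 0 for all i ∈ Z. Suppose a configuration with black set C and marking m is reachable from the configuration with black set Z and no marks by finitely many steps of the signing and coloring rule played on P_s itself. Then ν_i = 0 for all i ∈ C, and there exists ε ∈ {+1,−1} such that every marked node k with ν_k ≠ 0 satisfies m(k) = sign(ε·ν_k). -/
import Mathlib


/-- An entry of a sign pattern: `+`, `-`, `0`, or `?` (unrestricted). -/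
inductive SignPatEntry : Type
  | pos | neg | zero | unk
deriving DecidableEq

namespace SignPatEntry

/-- Sign inversion: `inv(+) = -`, `inv(-) = +`. -/
def inv : SignPatEntry → SignPatEntry
  | pos => neg
  | neg => pos
  | zero => zero
  | unk => unk

/-- Product of signs (used as `s · P(u,v)`). -/
def mul : SignPatEntry → SignPatEntry → SignPatEntry
  | pos, y => y
  | neg, y => y.inv
  | zero, _ => zero
  | unk, _ => unk

end SignPatEntry

/-- A real number matches a sign-pattern entry. -/
def matchesSign : SignPatEntry → ℝ → Prop
  | .pos, a => 0 < a
  | .neg, a => a < 0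
  | .zero, a => a = 0
  | .unk, _ => True

/-- The qualitative class of a sign pattern: real matrices whose entries have
the prescribed signs. -/
def QClass {n : ℕ} (P : Fin n → Fin n → SignPatEntry)
    (A : Matrix (Fin n) (Fin n) ℝ) : Prop :=
  ∀ i j : Fin n, matchesSign (P i j) (A i j)

/-- A configuration of the signing-and-coloring game: a set of black nodes and a
partial marking of nodes with signs. -/
structure Config (n : ℕ) where
  black : Finset (Fin n)
  mark : Fin n → Option SignPatEntry

/-- The set of white out-neighbors of `v` (out-neighbors of `v` are the `u` with
`P u v ≠ 0`). -/
def Wset {n : ℕ} (P : Fin n → Fin n → SignPatEntry) (c : Config n) (v : Fin n) :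
    Finset (Fin n) :=
  Finset.univ.filter (fun u => u ∉ c.black ∧ P u v ≠ SignPatEntry.zero)

/-- One step of the signing and coloring rule, played on the pattern `P`. -/
inductive Step {n : ℕ} (P : Fin n → Fin n → SignPatEntry) : Config n → Config n → Prop
  /-- (1) a pivot node `v` with a single white out-neighbor `u` forces `u` black. -/
  | force1 (c : Config n) (v u : Fin n)
      (hv : v ∈ c.black ∨ P v v ≠ SignPatEntry.unk)
      (hW : Wset P c v = {u}) :
      Step P c ⟨insert u c.black, c.mark⟩
  /-- (2) if all white out-neighbors of a pivot `v` are marked consistently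
  (all with `m(u) = P(u,v)` or all with `m(u) = -P(u,v)`), they all become black. -/
  | force2 (c : Config n) (v : Fin n)
      (hv : v ∈ c.black ∨ P v v ≠ SignPatEntry.unk)
      (hall : (∀ u ∈ Wset P c v, c.mark u = some (P u v)) ∨
              (∀ u ∈ Wset P c v, c.mark u = some (P u v).inv)) :
      Step P c ⟨c.black ∪ Wset P c v, c.mark⟩
  /-- (3) if exactly one white out-neighbor `w` of a pivot `v` is unmarked, at least one
  is marked, and every marked one satisfies `m(u) = s · P(u,v)`, then `w` gets
  marked with `-s · P(w,v)`. -/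
  | force3 (c : Config n) (v w : Fin n) (s : SignPatEntry)
      (hv : v ∈ c.black ∨ P v v ≠ SignPatEntry.unk)
      (hs : s = SignPatEntry.pos ∨ s = SignPatEntry.neg)
      (hw : w ∈ Wset P c v) (hwnone : c.mark w = none)
      (hmarked : ∀ u ∈ Wset P c v, u ≠ w → c.mark u = some (s.mul (P u v)))
      (hex : ∃ u ∈ Wset P c v, u ≠ w) :
      Step P c ⟨c.black, Function.update c.mark w (some (s.inv.mul (P w v)))⟩
  /-- (4) if no white node is marked, an arbitrary white node may be marked `+`. -/
  | force4 (c : Config n) (u : Fin n)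
      (hnomark : ∀ x : Fin n, x ∉ c.black → c.mark x = none)
      (hu : u ∉ c.black) :
      Step P c ⟨c.black, Function.update c.mark u (some SignPatEntry.pos)⟩

/-- The initial configuration: black set `Z`, no marks. -/
def initConfig {n : ℕ} (Z : Finset (Fin n)) : Config n := ⟨Z, fun _ => none⟩

/-- `Z` is a signed zero forcing set of the pattern `P`. -/
def SignedZFS {n : ℕ} (P : Fin n → Fin n → SignPatEntry) (Z : Finset (Fin n)) : Prop :=
  ∃ c : Config n, Relation.ReflTransGen (Step P) (initConfig Z) c ∧ c.black = Finset.univ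

/-- The negative looped pattern `P⁻`: off-diagonal as `P`; diagonal `-` if
`P i i ∈ {0,-}`, and `?` if `P i i ∈ {+,?}`. -/
def negLooped {n : ℕ} (P : Fin n → Fin n → SignPatEntry) :
    Fin n → Fin n → SignPatEntry := fun i j =>
  if i = j then
    (match P i i with
      | SignPatEntry.zero => SignPatEntry.neg
      | SignPatEntry.neg => SignPatEntry.neg
      | _ => SignPatEntry.unk)
  else P i j

/-- The positive looped pattern `P⁺`: off-diagonal as `P`; diagonal `+` if
`P i i ∈ {0,+}`, and `?` if `P i i ∈ {-,?}`. -/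
def posLooped {n : ℕ} (P : Fin n → Fin n → SignPatEntry) :
    Fin n → Fin n → SignPatEntry := fun i j =>
  if i = j then
    (match P i i with
      | SignPatEntry.zero => SignPatEntry.pos
      | SignPatEntry.pos => SignPatEntry.pos
      | _ => SignPatEntry.unk)
  else P i j

/-- The sign of a real number, as a sign-pattern entry. -/
noncomputable def sgnR (x : ℝ) : SignPatEntry :=
  if 0 < x then SignPatEntry.pos else if x < 0 then SignPatEntry.neg else SignPatEntry.zero

namespace Stmt2Aux
open SignPatEntry

/-- Real value of a sign entry. -/
noncomputable def toR : SignPatEntry → ℝ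
  | .pos => 1 | .neg => -1 | .zero => 0 | .unk => 0

lemma toR_inv (σ : SignPatEntry) : toR σ.inv = -toR σ := by
  cases σ <;> simp [toR, SignPatEntry.inv]

lemma toR_mul (s t : SignPatEntry) : toR (s.mul t) = toR s * toR t := by
  cases s <;> cases t <;> simp [toR, SignPatEntry.mul, SignPatEntry.inv]

lemma posneg_of_toR {σ : SignPatEntry} (h : toR σ ≠ 0) : σ = pos ∨ σ = neg := by
  cases σ <;> simp [toR] at h ⊢

lemma toR_pm {σ : SignPatEntry} (h : σ = pos ∨ σ = neg) : toR σ = 1 ∨ toR σ = -1 := by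
  rcases h with h | h <;> subst h <;> simp [toR]

lemma matches_iff {σ : SignPatEntry} (h : σ = pos ∨ σ = neg) (a : ℝ) :
    matchesSign σ a ↔ 0 < toR σ * a := by
  rcases h with h | h <;> subst h <;> simp [matchesSign, toR] <;>
    constructor <;> intro hh <;> linarith

lemma sgnR_of_pos {x : ℝ} (h : 0 < x) : sgnR x = pos := by simp [sgnR, h]

lemma sgnR_of_neg {x : ℝ} (h : x < 0) : sgnR x = neg := by
  simp [sgnR, h, not_lt.mpr h.le]

lemma sgn_iff {σ : SignPatEntry} (h : σ = pos ∨ σ = neg) {x : ℝ} (hx : x ≠ 0) :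
    σ = sgnR x ↔ 0 < toR σ * x := by
  rcases lt_or_gt_of_ne hx with h1 | h1
  · rw [sgnR_of_neg h1]
    rcases h with h | h <;> subst h
    · simp only [toR, one_mul]
      constructor
      · intro hh; cases hh
      · intro hh; linarith
    · simp only [toR]
      constructor
      · intro _; linarith
      · intro _; trivial
  · rw [sgnR_of_pos h1]
    rcases h with h | h <;> subst h
    · simp only [toR, one_mul]
      exact ⟨fun _ => h1, fun _ => trivial⟩
    · simp only [toR]
      constructor
      · intro hh; cases hh
      · intro hh; linarith

section
variable {n : ℕ} {P : Fin n → Fin n → SignPatEntry} {A : Matrix (Fin n) (Fin n) ℝ}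
  {ν : Fin n → ℝ}

/-- The invariant. -/
def Inv (ν : Fin n → ℝ) (c : Config n) : Prop :=
  (∀ i ∈ c.black, ν i = 0) ∧
  ∃ ε : ℝ, (ε = 1 ∨ ε = -1) ∧
    ∀ (k : Fin n) (σ : SignPatEntry), c.mark k = some σ → ν k ≠ 0 → σ = sgnR (ε * ν k)

lemma mem_Wset {c : Config n} {v u : Fin n} :
    u ∈ Wset P c v ↔ u ∉ c.black ∧ P u v ≠ SignPatEntry.zero := by
  simp [Wset]

lemma entry_pm (hP : ∀ i j : Fin n, i ≠ j → P i j ≠ SignPatEntry.unk)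
    {c : Config n} {v u : Fin n}
    (hv : v ∈ c.black ∨ P v v ≠ SignPatEntry.unk) (hu : u ∈ Wset P c v) :
    P u v = pos ∨ P u v = neg := by
  rw [mem_Wset] at hu
  obtain ⟨hub, hz⟩ := hu
  have hunk : P u v ≠ unk := by
    by_cases h : u = v
    · subst h
      rcases hv with h | h
      · exact absurd h hub
      · exact h
    · exact hP u v h
  cases h : P u v <;> simp_all

lemma colsum (hA : QClass P A) (hν : Matrix.vecMul ν A = 0)
    {c : Config n} (hb : ∀ i ∈ c.black, ν i = 0) (v : Fin n) :
    ∑ u ∈ Wset P c v, ν u * A u v = 0 := by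
  have h0 : ∑ i : Fin n, ν i * A i v = 0 := by
    have := congrFun hν v
    simpa [Matrix.vecMul, dotProduct] using this
  rw [← h0]
  apply Finset.sum_subset (Finset.subset_univ _)
  intro x _ hx
  rw [mem_Wset] at hx
  push_neg at hx
  by_cases hxb : x ∈ c.black
  · rw [hb x hxb]; ring
  · have hz : A x v = 0 := by
      have hm := hA x v
      rw [hx hxb] at hm
      exact hm
    rw [hz]; ring

lemma step_inv (hP : ∀ i j : Fin n, i ≠ j → P i j ≠ SignPatEntry.unk)
    (hA : QClass P A) (hν : Matrix.vecMul ν A = 0)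
    {c c' : Config n} (h : Step P c c') (hinv : Inv ν c) : Inv ν c' := by
  obtain ⟨hb, ε, hε, hm⟩ := hinv
  cases h with
  | force1 v u hv hW =>
      have hu : u ∈ Wset P c v := by rw [hW]; exact Finset.mem_singleton_self u
      have hpm := entry_pm hP hv hu
      have hApos : 0 < toR (P u v) * A u v := (matches_iff hpm _).mp (hA u v)
      have hsum := colsum hA hν hb v
      rw [hW, Finset.sum_singleton] at hsum
      have hAne : A u v ≠ 0 := by
        intro h0
        rw [h0, mul_zero] at hApos
        exact lt_irrefl 0 hApos
      have hνu : ν u = 0 := by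
        rcases mul_eq_zero.mp hsum with h0 | h0
        · exact h0
        · exact absurd h0 hAne
      refine ⟨?_, ε, hε, hm⟩
      intro i hi
      rcases Finset.mem_insert.mp hi with h0 | h0
      · rw [h0]; exact hνu
      · exact hb i h0
  | force2 v hv hall =>
      -- every white out-neighbor gets ν = 0
      have key : ∀ u ∈ Wset P c v, ν u = 0 := by
        obtain ⟨δ, hδ, hterm⟩ :
            ∃ δ : ℝ, (δ = 1 ∨ δ = -1) ∧
              ∀ u ∈ Wset P c v, ν u ≠ 0 → 0 < δ * (ν u * A u v) := by
          rcases hall with hall | hall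
          · refine ⟨ε, hε, ?_⟩
            intro u hu hνu
            have hpm := entry_pm hP hv hu
            have hApos : 0 < toR (P u v) * A u v := (matches_iff hpm _).mp (hA u v)
            have hεν : ε * ν u ≠ 0 := by
              rcases hε with h | h <;> subst h <;> simpa using hνu
            have hsg : 0 < toR (P u v) * (ε * ν u) :=
              (sgn_iff hpm hεν).mp (hm u (P u v) (hall u hu) hνu)
            rcases toR_pm hpm with ht | ht <;> rw [ht] at hApos hsg <;> nlinarith
          · have hδ : (-ε = 1 ∨ -ε = -1) := by
              rcases hε with h | h <;> subst h <;> simp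
            refine ⟨-ε, hδ, ?_⟩
            intro u hu hνu
            have hpm := entry_pm hP hv hu
            have hApos : 0 < toR (P u v) * A u v := (matches_iff hpm _).mp (hA u v)
            have hεν : ε * ν u ≠ 0 := by
              rcases hε with h | h <;> subst h <;> simpa using hνu
            have hipm : (P u v).inv = pos ∨ (P u v).inv = neg := by
              rcases hpm with h | h <;> rw [h] <;> simp [SignPatEntry.inv]
            have hsg : 0 < toR (P u v).inv * (ε * ν u) :=
              (sgn_iff hipm hεν).mp (hm u _ (hall u hu) hνu)
            rw [toR_inv] at hsg
            rcases toR_pm hpm with ht | ht <;> rw [ht] at hApos hsg <;> nlinarith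
        have hsum := colsum hA hν hb v
        have hsum' : ∑ u ∈ Wset P c v, δ * (ν u * A u v) = 0 := by
          rw [← Finset.mul_sum, hsum, mul_zero]
        have hnn : ∀ u ∈ Wset P c v, 0 ≤ δ * (ν u * A u v) := by
          intro u hu
          by_cases hνu : ν u = 0
          · rw [hνu]; simp
          · exact (hterm u hu hνu).le
        intro u hu
        by_contra hνu
        have := (Finset.sum_eq_zero_iff_of_nonneg hnn).mp hsum' u hu
        exact lt_irrefl 0 (this ▸ hterm u hu hνu)
      refine ⟨?_, ε, hε, hm⟩
      intro i hi
      rcases Finset.mem_union.mp hi with h0 | h0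
      · exact hb i h0
      · exact key i h0
  | force3 v w s hv hs hw hwnone hmarked hex =>
      refine ⟨hb, ε, hε, ?_⟩
      intro k σ hk hνk
      by_cases hkw : k = w
      · subst hkw
        simp only [Function.update_self] at hk
        injection hk with hk
        subst hk
        -- main sign computation for the new mark
        have hpmw := entry_pm hP hv hw
        have hAw : 0 < toR (P k v) * A k v := (matches_iff hpmw _).mp (hA k v)
        have hAkne : A k v ≠ 0 := by
          intro h0; rw [h0, mul_zero] at hAw; exact lt_irrefl 0 hAw
        have hts : toR s = 1 ∨ toR s = -1 := toR_pm hs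
        have hnn : ∀ u ∈ Wset P c v, u ≠ k → 0 ≤ toR s * ε * (ν u * A u v) := by
          intro u hu hne
          by_cases hνu : ν u = 0
          · rw [hνu]; simp
          · have hpm := entry_pm hP hv hu
            have hApos : 0 < toR (P u v) * A u v := (matches_iff hpm _).mp (hA u v)
            have hεν : ε * ν u ≠ 0 := by
              rcases hε with h | h <;> subst h <;> simpa using hνu
            have hmu := hm u _ (hmarked u hu hne) hνu
            have hspm : (s.mul (P u v)) = pos ∨ (s.mul (P u v)) = neg := by
              apply posneg_of_toR
              rw [toR_mul]
              rcases hts with h | h <;> rcases toR_pm hpm with h' | h' <;>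
                rw [h, h'] <;> norm_num
            have hsg : 0 < toR (s.mul (P u v)) * (ε * ν u) :=
              (sgn_iff hspm hεν).mp hmu
            rw [toR_mul] at hsg
            rcases toR_pm hpm with ht | ht <;> rw [ht] at hApos hsg <;>
              rcases hts with h | h <;> rcases hε with h2 | h2 <;>
              simp only [h, h2] at hsg ⊢ <;> nlinarith
        have hsum := colsum hA hν hb v
        have hsplit : ν k * A k v + ∑ u ∈ (Wset P c v).erase k, ν u * A u v = 0 := by
          rw [← Finset.add_sum_erase (Wset P c v) (fun u => ν u * A u v) hw] at hsum
          exact hsum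
        have hrest : 0 ≤ ∑ u ∈ (Wset P c v).erase k, toR s * ε * (ν u * A u v) := by
          apply Finset.sum_nonneg
          intro u hu
          exact hnn u (Finset.mem_of_mem_erase hu) (Finset.ne_of_mem_erase hu)
        rw [← Finset.mul_sum] at hrest
        have hle : toR s * ε * (ν k * A k v) ≤ 0 := by
          have h3 : ν k * A k v = -∑ u ∈ (Wset P c v).erase k, ν u * A u v := by
            linarith
          rw [h3]
          nlinarith [hrest]
        have hne : toR s * ε * (ν k * A k v) ≠ 0 := by
          rcases hts with h | h <;> rcases hε with h2 | h2 <;> rw [h, h2] <;>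
            simp [mul_eq_zero, hνk, hAkne]
        have hlt : toR s * ε * (ν k * A k v) < 0 := lt_of_le_of_ne hle hne
        -- target: s.inv.mul (P k v) = sgnR (ε * ν k)
        have htarget : toR (s.inv.mul (P k v)) = -(toR s * toR (P k v)) := by
          rw [toR_mul, toR_inv]; ring
        have hσpm : (s.inv.mul (P k v)) = pos ∨ (s.inv.mul (P k v)) = neg := by
          apply posneg_of_toR
          rw [htarget]
          rcases hts with h | h <;> rcases toR_pm hpmw with h' | h' <;>
            rw [h, h'] <;> norm_num
        have hεν : ε * ν k ≠ 0 := by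
          rcases hε with h | h <;> subst h <;> simpa using hνk
        rw [sgn_iff hσpm hεν, htarget]
        rcases hts with h | h <;> rcases toR_pm hpmw with h' | h' <;>
          rcases hε with h2 | h2 <;>
          simp only [h, h', h2] at hlt hAw ⊢ <;> nlinarith [hlt, hAw]
      · simp only [Function.update_of_ne hkw] at hk
        exact hm k σ hk hνk
  | force4 u hnomark hu =>
      refine ⟨hb, if 0 < ν u then 1 else -1, by split <;> simp, ?_⟩
      intro k σ hk hνk
      by_cases hkw : k = u
      · subst hkw
        simp only [Function.update_self] at hk
        injection hk with hk
        subst hk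
        rcases lt_or_gt_of_ne hνk with h1 | h1
        · rw [if_neg (not_lt.mpr h1.le)]
          rw [show (-1 : ℝ) * ν k = -ν k by ring]
          exact (sgnR_of_pos (by linarith)).symm
        · rw [if_pos h1, one_mul]
          exact (sgnR_of_pos h1).symm
      · simp only [Function.update_of_ne hkw] at hk
        by_cases hkb : k ∈ c.black
        · exact absurd (hb k hkb) hνk
        · rw [hnomark k hkb] at hk
          cases hk

lemma reach_inv (hP : ∀ i j : Fin n, i ≠ j → P i j ≠ SignPatEntry.unk)
    (hA : QClass P A) (hν : Matrix.vecMul ν A = 0)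
    {c c' : Config n} (h : Relation.ReflTransGen (Step P) c c') (hinv : Inv ν c) :
    Inv ν c' := by
  induction h with
  | refl => exact hinv
  | tail _ hstep ih => exact step_inv hP hA hν hstep ih

end
end Stmt2Aux

/-- If `ν` satisfies `νᵀ A = 0` for `A ∈ Q_s(P_s)` and vanishes on `Z`,
and a configuration `(C, m)` is reachable from `(Z, no marks)` by the signing and
coloring rule on `P_s` itself, then `ν` vanishes on `C` and, for some `ε ∈ {+1, -1}`,
every marked node `k` with `ν k ≠ 0` has mark `sign(ε · ν k)`. -/
theorem stmt2 {n : ℕ} (P : Fin n → Fin n → SignPatEntry)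
    (hP : ∀ i j : Fin n, i ≠ j → P i j ≠ SignPatEntry.unk)
    (A : Matrix (Fin n) (Fin n) ℝ) (hA : QClass P A)
    (ν : Fin n → ℝ) (hν : Matrix.vecMul ν A = 0)
    (Z : Finset (Fin n)) (hZ : ∀ i ∈ Z, ν i = 0)
    (c : Config n)
    (hreach : Relation.ReflTransGen (Step P) (initConfig Z) c) :
    (∀ i ∈ c.black, ν i = 0) ∧
    ∃ ε : ℝ, (ε = 1 ∨ ε = -1) ∧
      ∀ (k : Fin n) (σ : SignPatEntry), c.mark k = some σ → ν k ≠ 0 →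
        σ = sgnR (ε * ν k) := by
  have hinit : Stmt2Aux.Inv ν (initConfig Z) := by
    refine ⟨hZ, 1, Or.inl rfl, ?_⟩
    intro k σ hk
    cases hk
  obtain ⟨h1, h2⟩ := Stmt2Aux.reach_inv hP hA hν hreach hinit
  exact ⟨h1, h2⟩
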